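/- The system L_3(3; 2^{×5}) is non-special of virtual dimension −1; that is, there exist 5 pairwise linearly independent points p_1,...,p_5 ∈ ℚ^4 \ {0} such that the only homogeneous polynomial of degree 3 in 4 variables over ℚ vanishing together with all its first-order partial derivatives at every p_i is the zero polynomial, and indeed C(3+3,3) − 5·C(2+2,3) − 1 = 20 − 20 − 1 = −1. -/

import Mathlib

open MvPolynomial

/-- The differential operator `∂₀^{ν 0} ∂₁^{ν 1} ∂₂^{ν 2} ∂₃^{ν 3}` on polynomials
in 4 variables over `ℚ`. -/
noncomputable def diffOp (ν : Fin 4 → ℕ) :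
    Module.End ℚ (MvPolynomial (Fin 4) ℚ) :=
  ((pderiv (0 : Fin 4)).toLinearMap ^ ν 0) * ((pderiv (1 : Fin 4)).toLinearMap ^ ν 1) *
    ((pderiv (2 : Fin 4)).toLinearMap ^ ν 2) * ((pderiv (3 : Fin 4)).toLinearMap ^ ν 3)

/-- Polynomials all of whose partial derivatives of order `< m` (including order 0)
vanish at the point `pt : ℚ⁴`. -/
noncomputable def vanishingSpace (m : ℕ) (pt : Fin 4 → ℚ) :
    Submodule ℚ (MvPolynomial (Fin 4) ℚ) :=
  ⨅ (ν : Fin 4 → ℕ) (_ : ∑ j, ν j < m),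
    LinearMap.ker ((aeval pt).toLinearMap ∘ₗ
      (diffOp ν : MvPolynomial (Fin 4) ℚ →ₗ[ℚ] MvPolynomial (Fin 4) ℚ))

/-- `V(d; m_1,…,m_r; p_1,…,p_r)`: homogeneous polynomials of degree `d` in 4 variables
over `ℚ` vanishing to order `≥ ms[i]` at `pts i` for each `i`. -/
noncomputable def systemSpace (d : ℕ) (ms : List ℕ) (pts : Fin ms.length → Fin 4 → ℚ) :
    Submodule ℚ (MvPolynomial (Fin 4) ℚ) :=
  homogeneousSubmodule (Fin 4) ℚ d ⊓ ⨅ i, vanishingSpace (ms.get i) (pts i)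

/-- The virtual dimension `vdim L_3(d; m_1,…,m_r) = C(d+3,3) − Σ C(m_i+2,3) − 1`. -/
def vdim (d : ℕ) (ms : List ℕ) : ℤ :=
  ((d + 3).choose 3 : ℤ) - (ms.map fun m => ((m + 2).choose 3 : ℤ)).sum - 1

/-- The linear system `L_3(d; m_1,…,m_r)` is non-special: there exist pairwise linearly
independent points of `ℚ⁴ \ {0}` at which the space of degree-`d` homogeneous polynomials
with the prescribed multiplicities has dimension `max (vdim + 1) 0`
(the expected dimension). -/
noncomputable def nonSpecial (d : ℕ) (ms : List ℕ) : Prop :=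
  ∃ pts : Fin ms.length → Fin 4 → ℚ,
    (∀ i, pts i ≠ 0) ∧
    (∀ i j, i ≠ j → LinearIndependent ℚ ![pts i, pts j]) ∧
    (Module.finrank ℚ (systemSpace d ms pts) : ℤ) = max (vdim d ms + 1) 0

/-!
Take the coordinate points `eᵢ` and `(1,1,1,1)`. A cubic singular at `eᵢ` has no monomial `xᵢ³` or
`xᵢ²xⱼ`, so a cubic singular at all four coordinate points is a combination of the four
squarefree monomials. At `(1,1,1,1)` its value is the sum of these four coefficients and its
partial `∂ⱼ` is the sum of the three coefficients of the monomials containing `xⱼ`; all of these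
vanish only if every coefficient does. Hence the system space is `0`, of dimension `vdim + 1 = 0`.
-/

namespace Finsupp

variable {σ : Type*}

theorem exists_eq_single_add_single_one {m : σ →₀ ℕ} {k : σ} {n : ℕ} (hk : n ≤ m k)
    (hm : m.degree = n + 1) : ∃ j, m = single k n + single j 1 := by
  have hsplit : m = single k n + (m - single k n) :=
    (add_tsub_cancel_of_le (single_le_iff.2 hk)).symm
  have hdeg : (m - single k n).degree = 1 := by
    rw [hsplit, map_add, degree_single] at hm
    omega
  obtain ⟨j, hj⟩ := range_single_one.ge hdeg
  refine ⟨j, hsplit.trans ?_⟩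
  rw [← hj]

theorem exists_apply_eq_zero_of_degree_lt_card [Fintype σ] {m : σ →₀ ℕ}
    (h : m.degree < Fintype.card σ) : ∃ j, m j = 0 := by
  by_contra! hne
  refine h.not_ge ?_
  calc Fintype.card σ = ∑ _ : σ, 1 := by simp
    _ ≤ ∑ j, m j := Finset.sum_le_sum fun j _ => Nat.one_le_iff_ne_zero.2 (hne j)
    _ = m.degree := (degree_eq_sum m).symm

theorem eq_of_degree_eq_three_of_apply_eq_zero {m n : Fin 4 →₀ ℕ} (hm : ∀ k, m k ≤ 1)
    (hn : ∀ k, n k ≤ 1) (hmd : m.degree = 3) (hnd : n.degree = 3) {j : Fin 4} (hmj : m j = 0)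
    (hnj : n j = 0) : m = n := by
  rw [degree_eq_sum, Fin.sum_univ_four] at hmd hnd
  have := hm 0; have := hm 1; have := hm 2; have := hm 3
  have := hn 0; have := hn 1; have := hn 2; have := hn 3
  ext k
  fin_cases j <;> fin_cases k <;> simp only [Fin.zero_eta, Fin.mk_one, Fin.reduceFinMk] at * <;> omega

end Finsupp

namespace MvPolynomial

variable {σ R : Type*} [CommRing R]

theorem IsHomogeneous.degree_eq_of_coeff_ne_zero {f : MvPolynomial σ R} {n : ℕ}
    (hf : f.IsHomogeneous n) {m : σ →₀ ℕ} (hm : coeff m f ≠ 0) : m.degree = n := by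
  rw [Finsupp.degree_eq_weight_one]
  exact hf hm

theorem IsHomogeneous.eval_single_one [DecidableEq σ] {f : MvPolynomial σ R} {n : ℕ}
    (hf : f.IsHomogeneous n) (i : σ) :
    eval (Pi.single i 1) f = coeff (Finsupp.single i n) f := by
  rw [eval_eq, Finset.sum_eq_single (Finsupp.single i n)]
  · rw [Finset.prod_eq_one fun k hk => ?_, mul_one]
    rw [Finset.mem_singleton.1 (Finsupp.support_single_subset hk)]
    simp
  · intro m hm hne
    obtain ⟨k, hk, hki⟩ : ∃ k ∈ m.support, k ≠ i := by
      by_contra! h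
      have hmi : m = Finsupp.single i (m i) :=
        Finsupp.support_subset_singleton.1 fun k hk => Finset.mem_singleton.2 (h k hk)
      have hdeg := hf.degree_eq_of_coeff_ne_zero (mem_support_iff.1 hm)
      rw [hmi, Finsupp.degree_single] at hdeg
      exact hne (hdeg ▸ hmi)
    rw [Finset.prod_eq_zero hk (by simp [hki, Finsupp.mem_support_iff.1 hk]), mul_zero]
  · intro h
    rw [notMem_support_iff.1 h, zero_mul]

theorem IsHomogeneous.coeff_single_add_single_eq_zero [DecidableEq σ] [NoZeroDivisors R] [CharZero R]
    {f : MvPolynomial σ R} {n : ℕ} (hf : f.IsHomogeneous (n + 1)) {i j : σ}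
    (h : eval (Pi.single i 1) (pderiv j f) = 0) :
    coeff (Finsupp.single i n + Finsupp.single j 1) f = 0 := by
  rw [hf.pderiv.eval_single_one, Nat.add_sub_cancel, coeff_pderiv] at h
  exact (mul_eq_zero.1 h).resolve_right (Nat.cast_add_one_ne_zero _)

theorem eval_one_eq_sum_coeff (f : MvPolynomial σ R) :
    eval 1 f = ∑ m ∈ f.support, coeff m f := by
  simp [eval_eq]

theorem eval_one_pderiv (f : MvPolynomial σ R) (j : σ) :
    eval 1 (pderiv j f) = ∑ m ∈ f.support, coeff m f * m j := by
  conv_lhs => rw [f.as_sum]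
  simp only [map_sum, pderiv_monomial, eval_monomial, Pi.one_apply, one_pow, Finsupp.prod,
    Finset.prod_const_one, mul_one]

end MvPolynomial

theorem diffOp_zero : diffOp 0 = 1 := by
  simp [diffOp]

theorem diffOp_single (j : Fin 4) : diffOp (Pi.single j 1) = (pderiv j).toLinearMap := by
  fin_cases j <;> simp [diffOp]

theorem eval_diffOp_eq_zero_of_mem_vanishingSpace {m : ℕ} {pt : Fin 4 → ℚ}
    {f : MvPolynomial (Fin 4) ℚ} (hf : f ∈ vanishingSpace m pt) {ν : Fin 4 → ℕ}
    (hν : ∑ j, ν j < m) : eval pt (diffOp ν f) = 0 := by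
  simp only [vanishingSpace, Submodule.mem_iInf] at hf
  simpa [coe_aeval_eq_eval] using hf ν hν

theorem eval_eq_zero_of_mem_vanishingSpace {m : ℕ} (hm : 0 < m) {pt : Fin 4 → ℚ}
    {f : MvPolynomial (Fin 4) ℚ} (hf : f ∈ vanishingSpace m pt) : eval pt f = 0 := by
  simpa [diffOp_zero] using eval_diffOp_eq_zero_of_mem_vanishingSpace hf (ν := 0) (by simpa)

theorem eval_pderiv_eq_zero_of_mem_vanishingSpace {m : ℕ} (hm : 1 < m) {pt : Fin 4 → ℚ}
    {f : MvPolynomial (Fin 4) ℚ} (hf : f ∈ vanishingSpace m pt) (j : Fin 4) :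
    eval pt (pderiv j f) = 0 := by
  simpa [diffOp_single] using
    eval_diffOp_eq_zero_of_mem_vanishingSpace hf (ν := Pi.single j 1) (by simpa)

theorem eq_zero_of_isHomogeneous_three_of_mem_vanishingSpace {f : MvPolynomial (Fin 4) ℚ}
    (hf : f.IsHomogeneous 3) (hcoord : ∀ i, f ∈ vanishingSpace 2 (Pi.single i 1))
    (hone : f ∈ vanishingSpace 2 1) : f = 0 := by
  have hdeg : ∀ m ∈ f.support, m.degree = 3 := fun m hm =>
    hf.degree_eq_of_coeff_ne_zero (mem_support_iff.1 hm)
  have hsqfree : ∀ m ∈ f.support, ∀ k, m k ≤ 1 := by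
    intro m hm k
    by_contra! hk
    obtain ⟨j, rfl⟩ := Finsupp.exists_eq_single_add_single_one hk (hdeg m hm)
    exact mem_support_iff.1 hm <| hf.coeff_single_add_single_eq_zero <|
      eval_pderiv_eq_zero_of_mem_vanishingSpace one_lt_two (hcoord k) j
  rw [← support_eq_empty, Finset.eq_empty_iff_forall_notMem]
  intro m₀ hm₀
  obtain ⟨j, hj⟩ := Finsupp.exists_apply_eq_zero_of_degree_lt_card
    (m := m₀) (by simp [hdeg m₀ hm₀])
  -- `f(1) - ∂ⱼf(1)` is the sum of the coefficients of the monomials not involving `xⱼ`,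
  -- and `m₀` is the only squarefree cubic monomial of that kind.
  have hsum : ∑ m ∈ f.support, coeff m f * (1 - m j) = 0 := by
    simp only [mul_sub, mul_one, Finset.sum_sub_distrib, ← eval_one_eq_sum_coeff,
      ← eval_one_pderiv, eval_eq_zero_of_mem_vanishingSpace two_pos hone,
      eval_pderiv_eq_zero_of_mem_vanishingSpace one_lt_two hone, sub_zero]
  rw [Finset.sum_eq_single m₀ (fun m hm hne => ?_) (absurd hm₀), hj] at hsum
  · exact mem_support_iff.1 hm₀ (by simpa using hsum)
  · have hmj : m j = 1 := by
      have := hsqfree m hm j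
      have : m j ≠ 0 := fun hzero => hne <| Finsupp.eq_of_degree_eq_three_of_apply_eq_zero
        (hsqfree m hm) (hsqfree m₀ hm₀) (hdeg m hm) (hdeg m₀ hm₀) hzero hj
      omega
    simp [hmj]

def standardFrame : Fin 5 → Fin 4 → ℚ :=
  Fin.snoc (fun i => Pi.single i 1) 1

theorem standardFrame_ne_zero (i : Fin 5) : standardFrame i ≠ 0 := by
  induction i using Fin.lastCases <;>
    simp only [standardFrame, Fin.snoc_last, Fin.snoc_castSucc, ne_eq, one_ne_zero,
      Pi.single_eq_zero_iff, not_false_eq_true]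

theorem linearIndependent_pair_single {R σ : Type*} [Ring R] [DecidableEq σ] {i j : σ}
    (hij : i ≠ j) : LinearIndependent R ![(Pi.single i 1 : σ → R), Pi.single j 1] := by
  refine LinearIndependent.pair_iff.2 fun s t h => ⟨?_, ?_⟩
  · simpa [hij] using congrFun h i
  · simpa [hij.symm] using congrFun h j

theorem linearIndependent_pair_single_one {R σ : Type*} [Ring R] [DecidableEq σ]
    [Nontrivial σ] (i : σ) : LinearIndependent R ![(Pi.single i 1 : σ → R), 1] := by
  obtain ⟨k, hk⟩ := exists_ne i
  refine LinearIndependent.pair_iff.2 fun s t h => ?_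
  have ht : t = 0 := by simpa [hk] using congrFun h k
  subst ht
  simpa using congrFun h i

theorem linearIndependent_standardFrame_pair {i j : Fin 5} (hij : i ≠ j) :
    LinearIndependent ℚ ![standardFrame i, standardFrame j] := by
  induction i using Fin.lastCases <;> induction j using Fin.lastCases
  · exact absurd rfl hij
  · rw [LinearIndependent.pair_symm_iff]
    simpa only [standardFrame, Fin.snoc_last, Fin.snoc_castSucc] using
      linearIndependent_pair_single_one _
  · simpa only [standardFrame, Fin.snoc_last, Fin.snoc_castSucc] using
      linearIndependent_pair_single_one _
  · simpa only [standardFrame, Fin.snoc_castSucc] using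
      linearIndependent_pair_single (by simpa using hij)

theorem systemSpace_standardFrame :
    systemSpace 3 (List.replicate 5 2) standardFrame = ⊥ := by
  refine (Submodule.eq_bot_iff _).2 fun f hf => ?_
  obtain ⟨hhom, hvan⟩ := Submodule.mem_inf.1 hf
  have hvan (i : Fin 5) : f ∈ vanishingSpace 2 (standardFrame i) := by
    simpa only [List.get_eq_getElem, List.getElem_replicate] using (Submodule.mem_iInf _).1 hvan i
  exact eq_zero_of_isHomogeneous_three_of_mem_vanishingSpace
    ((mem_homogeneousSubmodule 3 f).1 hhom)
    (fun i => by simpa only [standardFrame, Fin.snoc_castSucc] using hvan i.castSucc)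
    (by simpa only [standardFrame, Fin.snoc_last] using hvan (Fin.last 4))

theorem vdim_three_two_pow_five : vdim 3 (List.replicate 5 2) = -1 := by
  decide

/-- `L_3(3; 2^{×5})` is non-special of virtual dimension `−1`. -/
theorem nonSpecial_three_two_pow_five :
    nonSpecial 3 (List.replicate 5 2) ∧ vdim 3 (List.replicate 5 2) = -1 := by
  refine ⟨⟨standardFrame, standardFrame_ne_zero, fun _ _ => linearIndependent_standardFrame_pair,
    ?_⟩, vdim_three_two_pow_five⟩
  rw [systemSpace_standardFrame, vdim_three_two_pow_five]
  simp
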